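/- For p = q = r = 0.05, the hybrid feedback strategy strictly outperforms the secret-key feedback strategy: Din1(0.05,0.05,0.05) ⊊ Din2(0.05,0.05,0.05). In particular, the point (R₁,R₂) = (1.2, 0.5) belongs to Din2(0.05,0.05,0.05) but not to Din1(0.05,0.05,0.05). -/
import Mathlib


/-- The binary entropy function to base 2, with the convention h(0)=h(1)=0
(automatic since `Real.logb 2 0 = 0`). -/
noncomputable def binEnt (x : ℝ) : ℝ := -x * Real.logb 2 x - (1 - x) * Real.logb 2 (1 - x)

/-- Non-feedback inner bound for the Dueck-type example with `Z₁ → Z₀ → Z₂`. -/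
noncomputable def Din (p q r : ℝ) : Set (ℝ × ℝ) :=
  {R : ℝ × ℝ | 0 ≤ R.1 ∧ R.1 ≤ 1 - binEnt q ∧ 0 ≤ R.2 ∧ R.2 ≤ 1 - binEnt r}

/-- Secret-key feedback inner bound for the Dueck-type example with `Z₁ → Z₀ → Z₂`. -/
noncomputable def Din1 (p q r : ℝ) : Set (ℝ × ℝ) :=
  {R : ℝ × ℝ | 0 ≤ R.1 ∧ 0 ≤ R.2 ∧ R.1 ≤ 1 ∧ R.2 ≤ 1 ∧
    R.1 ≤ 2 - binEnt p - binEnt q ∧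
    R.2 ≤ 2 - binEnt p - binEnt r ∧
    R.1 + R.2 ≤ 3 - binEnt p - binEnt q - binEnt r}

/-- Hybrid feedback inner bound for the Dueck-type example with `Z₁ → Z₀ → Z₂`. -/
noncomputable def Din2 (p q r : ℝ) : Set (ℝ × ℝ) :=
  {R : ℝ × ℝ | 0 ≤ R.1 ∧ 0 ≤ R.2 ∧ R.1 ≤ 1 + binEnt q ∧ R.2 ≤ 1 + binEnt r ∧
    R.1 ≤ 2 - binEnt p - binEnt q ∧
    R.2 ≤ 2 - binEnt p - binEnt r ∧
    R.1 + R.2 ≤ 3 - binEnt p - binEnt q - binEnt r}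

/-- Cut-set outer bound for the Dueck-type example with `Z₁ → Z₀ → Z₂`. -/
noncomputable def Dout (p q r : ℝ) : Set (ℝ × ℝ) :=
  {R : ℝ × ℝ | 0 ≤ R.1 ∧ 0 ≤ R.2 ∧
    R.1 ≤ 2 - binEnt p - binEnt q ∧
    R.2 ≤ 2 - binEnt p - binEnt r ∧
    R.1 + R.2 ≤ 3 - binEnt p - binEnt q - binEnt r}

lemma binEnt_bounds : (0.2:ℝ) ≤ binEnt 0.05 ∧ binEnt 0.05 ≤ 0.4 := by
  have hl2 : (0:ℝ) < Real.log 2 := Real.log_pos (by norm_num)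
  have hgt : (0.6931471803:ℝ) < Real.log 2 := Real.log_two_gt_d9
  have s54u : Real.log (5/4) ≤ 0.25 := by
    have := Real.log_le_sub_one_of_pos (show (0:ℝ) < 5/4 by norm_num)
    linarith
  have s54l : (0.2:ℝ) ≤ Real.log (5/4) := by
    have h := Real.log_le_sub_one_of_pos (show (0:ℝ) < 4/5 by norm_num)
    have h2 : Real.log (4/5) = - Real.log (5/4) := by
      rw [← Real.log_inv]; norm_num
    rw [h2] at h; linarith
  have tu : Real.log (20/19) ≤ 1/19 := by
    have := Real.log_le_sub_one_of_pos (show (0:ℝ) < 20/19 by norm_num)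
    linarith
  have tl : (0.05:ℝ) ≤ Real.log (20/19) := by
    have h := Real.log_le_sub_one_of_pos (show (0:ℝ) < 19/20 by norm_num)
    have h2 : Real.log (19/20) = - Real.log (20/19) := by
      rw [← Real.log_inv]; norm_num
    rw [h2] at h; linarith
  have l20 : Real.log 20 = 4 * Real.log 2 + Real.log (5/4) := by
    have h20 : (20:ℝ) = 2^4 * (5/4) := by norm_num
    rw [h20, Real.log_mul (by norm_num) (by norm_num), Real.log_pow]
    push_cast; ring
  have e1 : binEnt 0.05 = (0.05 * Real.log 20 + 0.95 * Real.log (20/19)) / Real.log 2 := by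
    unfold binEnt Real.logb
    have h1 : Real.log 0.05 = - Real.log 20 := by
      rw [← Real.log_inv]; norm_num
    have h2 : Real.log (1 - 0.05) = - Real.log (20/19) := by
      rw [← Real.log_inv]; norm_num
    rw [h1, h2]; ring
  constructor
  · rw [e1, le_div_iff₀ hl2]; nlinarith
  · rw [e1, div_le_iff₀ hl2]; nlinarith

/-- For `p = q = r = 0.05`, the hybrid feedback strategy strictly outperforms
the secret-key feedback strategy; the point `(1.2, 0.5)` witnesses the gap. -/
theorem Din1_ssubset_Din2 :
    Din1 0.05 0.05 0.05 ⊂ Din2 0.05 0.05 0.05 ∧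
    ((1.2, 0.5) : ℝ × ℝ) ∈ Din2 0.05 0.05 0.05 ∧
    ((1.2, 0.5) : ℝ × ℝ) ∉ Din1 0.05 0.05 0.05 := by
  obtain ⟨hbl, hbu⟩ := binEnt_bounds
  have hin : ((1.2, 0.5) : ℝ × ℝ) ∈ Din2 0.05 0.05 0.05 := by
    refine ⟨by norm_num, by norm_num, ?_, ?_, ?_, ?_, ?_⟩ <;> simp only [] <;> linarith
  have hnotin : ((1.2, 0.5) : ℝ × ℝ) ∉ Din1 0.05 0.05 0.05 := by
    rintro ⟨-, -, h1, -⟩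
    norm_num at h1
  have hsub : Din1 0.05 0.05 0.05 ⊆ Din2 0.05 0.05 0.05 := by
    rintro R ⟨h1, h2, h3, h4, h5, h6, h7⟩
    exact ⟨h1, h2, by linarith, by linarith, h5, h6, h7⟩
  exact ⟨⟨hsub, fun hc => hnotin (hc hin)⟩, hin, hnotin⟩
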